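/- Let R be a ring. The following are equivalent: (i) for every projective left R-module P, a submodule of P is superfluous in P if and only if it is contained in J(R)P; (ii) the Jacobson radical J(R) is left T-nilpotent. -/

import Mathlib

universe u

open Function CategoryTheory

/-! ### Ring-theoretic preliminaries -/

/-- The Jacobson radical of a ring (the intersection of all maximal left ideals). -/
def jac (R : Type u) [Ring R] : Ideal R := Ideal.jacobson (⊥ : Ideal R)

section Modules

variable (R : Type u) [Ring R] (M : Type u) [AddCommGroup M] [Module R M]

/-- A submodule `N` of `M` is superfluous (small) if `N ⊔ L = M` implies `L = M`. -/
def Superfluous (N : Submodule R M) : Prop :=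
  ∀ L : Submodule R M, N ⊔ L = ⊤ → L = ⊤

/-- The submodule `I • p` generated by the products of elements of a left ideal `I`
with elements of a submodule `p`. -/
def idealSMul (I : Ideal R) (p : Submodule R M) : Submodule R M :=
  Submodule.span R {x | ∃ a ∈ I, ∃ m ∈ p, x = a • m}

/-- The powers `J(R)^n • M` of the radical acting on a module. -/
def radPow : ℕ → Submodule R M
  | 0 => ⊤
  | n + 1 => idealSMul R M (jac R) (radPow n)

/-- The Loewy length of a module: the least `n` with `J(R)^n M = 0` (`⊤` if none exists). -/
noncomputable def loewyLength : ℕ∞ :=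
  sInf ((↑) '' {n : ℕ | radPow R M n = ⊥})

/-- A projective cover: a linear surjection from a projective module with superfluous kernel. -/
def IsProjectiveCover {P : Type u} [AddCommGroup P] [Module R P]
    (f : P →ₗ[R] M) : Prop :=
  Module.Projective R P ∧ Function.Surjective f ∧ Superfluous R P (LinearMap.ker f)

/-- A module is indecomposable if it is non-zero and admits no non-trivial
direct sum decomposition. -/
def IsIndecomposableModule : Prop :=
  Nontrivial M ∧ ∀ N₁ N₂ : Submodule R M, IsCompl N₁ N₂ → N₁ = ⊥ ∨ N₂ = ⊥

/-- A submodule is indecomposable if it is non-zero and is not the direct sum of two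
non-zero submodules. -/
def IsIndecomposableSubmodule (N : Submodule R M) : Prop :=
  N ≠ ⊥ ∧ ∀ N₁ N₂ : Submodule R M, N₁ ≤ N → N₂ ≤ N → N₁ ⊓ N₂ = ⊥ → N₁ ⊔ N₂ = N →
    N₁ = ⊥ ∨ N₂ = ⊥

end Modules

section Rings

variable (R : Type u) [Ring R]

/-- A ring is semilocal if it is semisimple modulo its Jacobson radical. -/
def IsSemilocalRing : Prop :=
  IsSemisimpleModule R (R ⧸ jac R)

/-- A ring is semiperfect if it is semilocal and idempotents lift modulo the radical. -/
def IsSemiperfectRing : Prop :=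
  IsSemilocalRing R ∧
    ∀ x : R, x * x - x ∈ jac R → ∃ e : R, IsIdempotentElem e ∧ e - x ∈ jac R

/-- A subset `T` of a ring is left T-nilpotent if every sequence in `T` has a
vanishing initial product `a 0 * a 1 * ⋯ * a n`. -/
def IsLeftTNilpotent {R : Type u} [Ring R] (T : Set R) : Prop :=
  ∀ a : ℕ → R, (∀ i, a i ∈ T) → ∃ n : ℕ, ((List.range (n + 1)).map a).prod = 0

/-- A ring is left perfect if it is semilocal with left T-nilpotent radical. -/
def IsLeftPerfectRing : Prop :=
  IsSemilocalRing R ∧ IsLeftTNilpotent (jac R : Set R)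

/-- `I ^ n = 0`: every product of `n` elements of `I` vanishes. -/
def IdealPowZero (I : Ideal R) (n : ℕ) : Prop :=
  ∀ a : ℕ → R, (∀ i, a i ∈ I) → ((List.range n).map a).prod = 0

/-- A ring is semiprimary if it is semilocal and its Jacobson radical is nilpotent. -/
def IsSemiprimaryRing' : Prop :=
  IsSemilocalRing R ∧ ∃ n : ℕ, IdealPowZero R (jac R) n

/-- A primitive idempotent: a non-zero idempotent admitting no non-trivial
decomposition into orthogonal idempotents. -/
def IsPrimitiveIdem (e : R) : Prop :=
  IsIdempotentElem e ∧ e ≠ 0 ∧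
    ∀ f g : R, IsIdempotentElem f → IsIdempotentElem g → f * g = 0 → g * f = 0 →
      f + g = e → f = 0 ∨ g = 0

/-- A complete set of primitive orthogonal idempotents. -/
def IsCompleteOrthogonalPrimitiveSet {ι : Type u} [Fintype ι] (e : ι → R) : Prop :=
  (∀ i, IsPrimitiveIdem R (e i)) ∧ (∀ i j, i ≠ j → e i * e j = 0) ∧ ∑ i, e i = 1

/-- A complete set of primitive orthogonal idempotents is basic if the corresponding
indecomposable projective modules `R e i` are pairwise non-isomorphic. -/
def IsBasicSet {ι : Type u} [Fintype ι] (e : ι → R) : Prop :=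
  IsCompleteOrthogonalPrimitiveSet R e ∧
    ∀ i j, Nonempty ((Ideal.span {e i}) ≃ₗ[R] (Ideal.span {e j})) → i = j

/-- A ring is basic if it admits a complete set of primitive orthogonal idempotents
that is basic. -/
def IsBasicRing : Prop :=
  ∃ (ι : Type u) (_ : Fintype ι) (e : ι → R), IsBasicSet R e

end Rings

/-! ### Homological dimensions -/

section Dim

variable (A : Type u) [Ring A]

/-- `projDimLE A n M`: the `A`-module `M` admits a projective resolution of length `≤ n`. -/
def projDimLE : ℕ → ModuleCat.{u} A → Prop
  | 0, M => Projective M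
  | n + 1, M => ∃ (K P : ModuleCat.{u} A) (f : K ⟶ P) (g : P ⟶ M),
      Projective P ∧ Function.Injective f ∧ Function.Surjective g ∧
      (∀ x, g (f x) = 0) ∧ (∀ y, g y = 0 → ∃ x, f x = y) ∧ projDimLE n K

/-- The projective dimension of a module, as an extended natural number. -/
noncomputable def projDim (M : ModuleCat.{u} A) : ℕ∞ :=
  sInf ((↑) '' {n : ℕ | projDimLE A n M})

/-- `injDimLE A n M`: the `A`-module `M` admits an injective coresolution of length `≤ n`. -/
def injDimLE : ℕ → ModuleCat.{u} A → Prop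
  | 0, M => Injective M
  | n + 1, M => ∃ (I C : ModuleCat.{u} A) (f : M ⟶ I) (g : I ⟶ C),
      Injective I ∧ Function.Injective f ∧ Function.Surjective g ∧
      (∀ x, g (f x) = 0) ∧ (∀ y, g y = 0 → ∃ x, f x = y) ∧ injDimLE n C

/-- The injective dimension of a module, as an extended natural number. -/
noncomputable def injDim (M : ModuleCat.{u} A) : ℕ∞ :=
  sInf ((↑) '' {n : ℕ | injDimLE A n M})

/-- The left global dimension of a ring. -/
noncomputable def glDim : ℕ∞ :=
  ⨆ M : ModuleCat.{u} A, projDim A M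

/-- The little finitistic dimension: the supremum of the projective dimensions of
finitely generated left modules of finite projective dimension. -/
noncomputable def finDim : ℕ∞ :=
  ⨆ (M : ModuleCat.{u} A) (_ : Module.Finite A M ∧ projDim A M ≠ ⊤), projDim A M

/-- The big finitistic dimension: the supremum of the projective dimensions of
all left modules of finite projective dimension. -/
noncomputable def FinDim : ℕ∞ :=
  ⨆ (M : ModuleCat.{u} A) (_ : projDim A M ≠ ⊤), projDim A M

end Dim

/-! ### Induction along a ring homomorphism -/

section Tensor

variable {A B : Type u} [Ring A] [Ring B] (φ : A →+* B)

/-- The relations defining `B ⊗_A M` inside `B ⊗_ℤ M`. -/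
def TensorRel (M : Type u) [AddCommGroup M] [Module A M] :
    Submodule B (TensorProduct ℤ B M) :=
  Submodule.span B
    {x | ∃ (b : B) (a : A) (m : M), x = (b * φ a) ⊗ₜ[ℤ] m - b ⊗ₜ[ℤ] (a • m)}

/-- The induced module `B ⊗_A M` along a ring homomorphism `φ : A →+* B`, realized
as the quotient of `B ⊗_ℤ M` by the bilinearity relations for the `A`-actions. -/
def TensorB (M : Type u) [AddCommGroup M] [Module A M] : Type u :=
  TensorProduct ℤ B M ⧸ TensorRel φ M

noncomputable instance (M : Type u) [AddCommGroup M] [Module A M] :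
    AddCommGroup (TensorB φ M) :=
  inferInstanceAs (AddCommGroup (TensorProduct ℤ B M ⧸ TensorRel φ M))

noncomputable instance (M : Type u) [AddCommGroup M] [Module A M] :
    Module B (TensorB φ M) :=
  inferInstanceAs (Module B (TensorProduct ℤ B M ⧸ TensorRel φ M))

/-- The map induced on `B ⊗_ℤ ·` by an `A`-linear map `f`. -/
noncomputable def tmapAux {M N : Type u} [AddCommGroup M] [Module A M]
    [AddCommGroup N] [Module A N] (f : M →ₗ[A] N) :
    TensorProduct ℤ B M →ₗ[B] TensorProduct ℤ B N :=
  TensorProduct.AlgebraTensorModule.map (LinearMap.id : B →ₗ[B] B)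
    f.toAddMonoidHom.toIntLinearMap

/-- The induction functor on morphisms: `B ⊗_A f : B ⊗_A M →ₗ[B] B ⊗_A N`. -/
noncomputable def tmap {M N : Type u} [AddCommGroup M] [Module A M]
    [AddCommGroup N] [Module A N] (f : M →ₗ[A] N) :
    TensorB φ M →ₗ[B] TensorB φ N :=
  Submodule.mapQ (TensorRel φ M) (TensorRel φ N) (tmapAux (B := B) f) (by
    rw [TensorRel, Submodule.span_le]
    rintro x ⟨b, a, m, rfl⟩
    have : (tmapAux (B := B) f) ((b * φ a) ⊗ₜ[ℤ] m - b ⊗ₜ[ℤ] (a • m)) =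
        (b * φ a) ⊗ₜ[ℤ] (f m) - b ⊗ₜ[ℤ] (a • f m) := by
      simp [tmapAux, map_smul]
    rw [SetLike.mem_coe, Submodule.mem_comap, this]
    exact Submodule.subset_span ⟨b, a, f m, rfl⟩)

/-- `torVanish φ n M` encodes the vanishing `Tor_{n+1}^A(B, M) = 0`, via dimension
shifting through short exact sequences `0 → K → P → M → 0` with `P` projective. -/
def torVanish : ℕ → ModuleCat.{u} A → Prop
  | 0, M => ∀ (K P : ModuleCat.{u} A) (f : K ⟶ P) (g : P ⟶ M),
      Projective P → Function.Injective f → Function.Surjective g →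
      (∀ x, g (f x) = 0) → (∀ y, g y = 0 → ∃ x, f x = y) →
      Function.Injective (tmap φ (f.hom : ↥K →ₗ[A] ↥P))
  | n + 1, M => ∀ (K P : ModuleCat.{u} A) (f : K ⟶ P) (g : P ⟶ M),
      Projective P → Function.Injective f → Function.Surjective g →
      (∀ x, g (f x) = 0) → (∀ y, g y = 0 → ∃ x, f x = y) →
      torVanish n K

/-- The flat dimension of `B` as a right `A`-module along `φ`, characterized by Tor
vanishing: `flatdim B_A ≤ d` iff `Tor_n^A(B, M) = 0` for all `n > d` and all left
`A`-modules `M`. -/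
noncomputable def flatDimR : ℕ∞ :=
  sInf ((↑) '' {d : ℕ | ∀ (M : ModuleCat.{u} A) (n : ℕ), d ≤ n → torVanish φ n M})

/-- `B` as a right `A`-module (i.e. a left `Aᵐᵒᵖ`-module) via `φ`. -/
noncomputable def rightModule : Module Aᵐᵒᵖ B :=
  Module.compHom B (RingHom.op φ)

/-- The projective dimension of `B` as a right `A`-module via `φ`. -/
noncomputable def pdBA : ℕ∞ :=
  letI := rightModule φ
  projDim Aᵐᵒᵖ (ModuleCat.of Aᵐᵒᵖ B)

end Tensor

/-!
A superfluous submodule lies in every maximal submodule, hence in the radical of the module;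
for a projective `P` the radical is `J(R)P`, since the coordinates of a radical element with
respect to a splitting `P → R^(P)` lie in `J(R)`.

If `J(R)` is left T-nilpotent, then `J(R)M = M` forces `M = 0`: from `c • y ≠ 0` with
`y ∈ J(R)M` one extracts `a ∈ J(R)` and `z` with `(c * a) • z ≠ 0`, and iterating from a nonzero
`m` gives a sequence in `J(R)` none of whose initial products vanishes. Applied to `M / L` this
makes `J(R)M` superfluous.

Conversely, if `J(R)F` is superfluous in `F = R^(ℕ)`, then for `a n ∈ J(R)` the vectors
`e n - a n • e (n + 1)` span `F`, since together with `J(R)F` they do. Writing `e 0` in terms of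
them, the `n`-th coefficient is `a 0 * ⋯ * a (n - 1)`, and these vanish for large `n`.
-/

theorem idealSMul_eq_smul {R M : Type u} [Ring R] [AddCommGroup M] [Module R M] (I : Ideal R)
    (p : Submodule R M) : idealSMul R M I p = I • p := by
  refine le_antisymm (Submodule.span_le.mpr ?_) (Submodule.smul_le.mpr fun a ha m hm => ?_)
  · rintro _ ⟨a, ha, m, hm, rfl⟩
    exact Submodule.smul_mem_smul ha hm
  · exact Submodule.subset_span ⟨a, ha, m, hm, rfl⟩

theorem jac_eq_jacobson (R : Type u) [Ring R] : jac R = Ring.jacobson R :=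
  Ideal.jacobson_bot

namespace Superfluous

variable {R M : Type u} [Ring R] [AddCommGroup M] [Module R M]

theorem mono {N N' : Submodule R M} (h : Superfluous R M N') (hN : N ≤ N') :
    Superfluous R M N :=
  fun L hL => h L (top_le_iff.mp (hL ▸ sup_le_sup_right hN L))

theorem le_jacobson {N : Submodule R M} (h : Superfluous R M N) : N ≤ Module.jacobson R M :=
  le_sInf fun K hK => by_contra fun hNK => hK.1 (h K (hK.2 _ (right_lt_sup.mpr hNK)))

end Superfluous

theorem Module.jacobson_le_jacobson_smul_top_of_projective {R P : Type*} [Ring R]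
    [AddCommGroup P] [Module R P] [Module.Projective R P] :
    Module.jacobson R P ≤ Ring.jacobson R • ⊤ := by
  obtain ⟨s, hs⟩ := Module.projective_def.mp ‹Module.Projective R P›
  intro x hx
  have hcoord : ∀ i, s x i ∈ Ring.jacobson R := fun i =>
    Module.le_comap_jacobson ((Finsupp.lapply i).comp s) hx
  rw [← hs x, Finsupp.linearCombination_apply]
  exact Submodule.finsuppSum_mem _ _ _ _ fun i _ =>
    Submodule.smul_mem_smul (hcoord i) Submodule.mem_top

section SmulTopEqTop

variable {R M : Type*} [Ring R] [AddCommGroup M] [Module R M] {I : Ideal R}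

theorem exists_mul_smul_ne_zero_of_smul_top_eq_top (hI : I • (⊤ : Submodule R M) = ⊤) {c : R}
    {y : M} (hy : c • y ≠ 0) : ∃ a ∈ I, ∃ z : M, (c * a) • z ≠ 0 := by
  by_contra! h
  have hy' : y ∈ I • (⊤ : Submodule R M) := by rw [hI]; exact Submodule.mem_top
  refine hy (Submodule.smul_induction_on hy' (p := fun y => c • y = 0) ?_ ?_)
  · intro a ha z _
    rw [smul_smul]
    exact h a ha z
  · intro y₁ y₂ h₁ h₂
    rw [smul_add, h₁, h₂, add_zero]

theorem subsingleton_of_smul_top_eq_top (hT : IsLeftTNilpotent (I : Set R))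
    (hI : I • (⊤ : Submodule R M) = ⊤) : Subsingleton M := by
  by_contra! hM
  obtain ⟨m, hm⟩ := exists_ne (0 : M)
  choose a haI z hz using fun p : {p : R × M // p.1 • p.2 ≠ 0} =>
    exists_mul_smul_ne_zero_of_smul_top_eq_top hI p.2
  let seq : ℕ → {p : R × M // p.1 • p.2 ≠ 0} := fun n =>
    Nat.rec ⟨(1, m), by rwa [one_smul]⟩ (fun _ p => ⟨(p.1.1 * a p, z p), hz p⟩) n
  have hprod : ∀ n, (seq n).1.1 = ((List.range n).map fun i => a (seq i)).prod := by
    intro n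
    induction n with
    | zero => rfl
    | succ n ih => rw [List.prod_range_succ, ← ih]
  obtain ⟨n, hn⟩ := hT _ fun i => haI (seq i)
  exact (seq (n + 1)).2 (by rw [show (seq (n + 1)).1.1 = 0 from (hprod _).trans hn, zero_smul])

end SmulTopEqTop

theorem superfluous_smul_top_of_isLeftTNilpotent {R M : Type u} [Ring R] [AddCommGroup M]
    [Module R M] {I : Ideal R} (hT : IsLeftTNilpotent (I : Set R)) :
    Superfluous R M (I • ⊤) := by
  intro L hL
  have hquot : I • (⊤ : Submodule R (M ⧸ L)) = ⊤ := by
    have := congrArg (Submodule.map L.mkQ) hL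
    rwa [Submodule.map_sup, Submodule.map_smul'', Submodule.map_top, Submodule.range_mkQ,
      Submodule.mkQ_map_self, sup_bot_eq] at this
  exact Submodule.Quotient.subsingleton_iff.mp (subsingleton_of_smul_top_eq_top hT hquot)
section BassVector

variable {R : Type*} [Ring R] (a : ℕ → R)

noncomputable def bassVector (n : ℕ) : ℕ →₀ R :=
  Finsupp.single n 1 - Finsupp.single (n + 1) (a n)

theorem linearCombination_bassVector_apply_zero (c : ℕ →₀ R) :
    Finsupp.linearCombination R (bassVector a) c 0 = c 0 := by
  simp [bassVector, Finsupp.linearCombination_apply, Finsupp.sum_apply, Finsupp.single_apply]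

theorem linearCombination_bassVector_apply_succ (c : ℕ →₀ R) (k : ℕ) :
    Finsupp.linearCombination R (bassVector a) c (k + 1) = c (k + 1) - c k * a k := by
  simp +contextual [bassVector, Finsupp.linearCombination_apply, Finsupp.sum_apply,
    Finsupp.single_apply, mul_sub]

theorem eq_prod_of_linearCombination_bassVector_eq_single {c : ℕ →₀ R}
    (hc : Finsupp.linearCombination R (bassVector a) c = Finsupp.single 0 1) (n : ℕ) :
    c n = ((List.range n).map a).prod := by
  induction n with
  | zero => simpa [linearCombination_bassVector_apply_zero] using congr($hc 0)
  | succ n ih =>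
    have := congr($hc (n + 1))
    rw [linearCombination_bassVector_apply_succ, Finsupp.single_eq_of_ne (by omega),
      sub_eq_zero] at this
    rw [this, ih, List.prod_range_succ]

theorem smul_top_sup_range_bassVector {I : Ideal R} (ha : ∀ n, a n ∈ I) :
    I • ⊤ ⊔ LinearMap.range (Finsupp.linearCombination R (bassVector a)) = ⊤ := by
  refine eq_top_iff.mpr (Finsupp.basisSingleOne.span_eq.ge.trans (Submodule.span_le.mpr ?_))
  rintro _ ⟨n, rfl⟩
  show Finsupp.single n 1 ∈ _
  have hsplit : Finsupp.single n (1 : R) = a n • Finsupp.single (n + 1) 1 + bassVector a n := by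
    simp [bassVector]
  rw [hsplit]
  refine Submodule.add_mem _ (Submodule.mem_sup_left (Submodule.smul_mem_smul (ha n) trivial))
    (Submodule.mem_sup_right ⟨Finsupp.single n 1, ?_⟩)
  rw [Finsupp.linearCombination_single, one_smul]

end BassVector

theorem isLeftTNilpotent_of_superfluous_smul_top {R : Type u} [Ring R] {I : Ideal R}
    (h : Superfluous R (ℕ →₀ R) (I • ⊤)) : IsLeftTNilpotent (I : Set R) := by
  intro a ha
  have hrange := h _ (smul_top_sup_range_bassVector a ha)
  obtain ⟨c, hc⟩ := LinearMap.range_eq_top.mp hrange (Finsupp.single 0 1)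
  obtain ⟨n, hn⟩ := Finset.exists_nat_subset_range c.support
  refine ⟨n, ?_⟩
  rw [← eq_prod_of_linearCombination_bassVector_eq_single a hc, ← Finsupp.notMem_support_iff]
  exact fun hmem => by simpa using hn hmem

/-- In every projective module the superfluous submodules are
exactly those contained in `J(R)P`, iff `J(R)` is left T-nilpotent. -/
theorem statement_4 (R : Type u) [Ring R] :
    (∀ (P : Type u) [AddCommGroup P] [Module R P], Module.Projective R P →
        ∀ N : Submodule R P, (Superfluous R P N ↔ N ≤ idealSMul R P (jac R) ⊤)) ↔
      IsLeftTNilpotent (jac R : Set R) := by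
  simp only [idealSMul_eq_smul, jac_eq_jacobson]
  refine ⟨fun h => isLeftTNilpotent_of_superfluous_smul_top ((h _ inferInstance _).mpr le_rfl),
    fun hT P _ _ _ N => ⟨fun hN => ?_, fun hN => ?_⟩⟩
  · exact hN.le_jacobson.trans Module.jacobson_le_jacobson_smul_top_of_projective
  · exact (superfluous_smul_top_of_isLeftTNilpotent hT).mono hN
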